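/- For all integers k ≥ 0 and ℓ > 0, m > 0 with ℓ + m ≤ k and ℓ + m ≡ k (mod 2), define e₁ = (F_{k,ℓ,m} + F_{k,−ℓ,−m})/√2, e₂ = (F_{k,−ℓ,m} − F_{k,ℓ,−m})/√2, e₃ = (F_{k,ℓ,m} − F_{k,−ℓ,−m})/√2, e₄ = (F_{k,−ℓ,m} + F_{k,ℓ,−m})/√2. Then for all real Δθ, Δφ, setting α = ℓΔθ − mΔφ and β = ℓΔθ + mΔφ: e₁ ∘ R(Δθ,Δφ) = cos(α)·e₁ − sin(α)·e₂, e₂ ∘ R(Δθ,Δφ) = sin(α)·e₁ + cos(α)·e₂, e₃ ∘ R(Δθ,Δφ) = cos(β)·e₃ − sin(β)·e₄, and e₄ ∘ R(Δθ,Δφ) = sin(β)·e₃ + cos(β)·e₄. -/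
import Mathlib


noncomputable section


/-- `circ j u v` is `A_j(u,v)`: the real part of `(u + iv)^|j|` if `j ≥ 0`,
and the imaginary part if `j < 0`. -/
def circ (j : ℤ) (u v : ℝ) : ℝ :=
  if 0 ≤ j then (((u : ℂ) + v * Complex.I) ^ j.natAbs).re
  else (((u : ℂ) + v * Complex.I) ^ j.natAbs).im

/-- `dd k ℓ m = (k - |ℓ| - |m|) / 2`. -/
def dd (k : ℕ) (ℓ m : ℤ) : ℕ := (k - ℓ.natAbs - m.natAbs) / 2

/-- The function `F_{kℓm} : ℝ⁴ → ℝ`. -/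
def F (k : ℕ) (ℓ m : ℤ) (p : Fin 4 → ℝ) : ℝ :=
  (∑ i ∈ Finset.range (dd k ℓ m + 1),
      (Nat.choose (m.natAbs + dd k ℓ m) i : ℝ) *
      (Nat.choose (ℓ.natAbs + dd k ℓ m) (dd k ℓ m - i) : ℝ) *
      (p 0 ^ 2 + p 1 ^ 2) ^ i * (-(p 2 ^ 2 + p 3 ^ 2)) ^ (dd k ℓ m - i))
    * circ ℓ (p 0) (p 1) * circ m (p 2) (p 3)

/-- `f` is the evaluation of a homogeneous polynomial of degree `k`. -/
def IsHomogeneousPolyEval (k : ℕ) (f : (Fin 4 → ℝ) → ℝ) : Prop :=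
  ∃ P : MvPolynomial (Fin 4) ℝ, P.IsHomogeneous k ∧ ∀ v, MvPolynomial.eval v P = f v

/-- `f` is harmonic: the sum of its four second coordinate partial derivatives vanishes. -/
def IsHarmonic (f : (Fin 4 → ℝ) → ℝ) : Prop :=
  ∀ v : Fin 4 → ℝ,
    ∑ i : Fin 4, fderiv ℝ (fun w => fderiv ℝ f w (Pi.single i 1)) v (Pi.single i 1) = 0

/-- The Jacobi polynomial `P_d^{(a,b)}`. -/
def jacobiP (d a b : ℕ) (u : ℝ) : ℝ :=
  (1 / 2 ^ d) * ∑ i ∈ Finset.range (d + 1),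
    (Nat.choose (a + d) i : ℝ) * (Nat.choose (b + d) (d - i) : ℝ) *
      (u + 1) ^ i * (u - 1) ^ (d - i)

/-- The radial function `X_{kℓm}`. -/
def Xrad (k : ℕ) (ℓ m : ℤ) (χ : ℝ) : ℝ :=
  Real.cos χ ^ ℓ.natAbs * Real.sin χ ^ m.natAbs *
    jacobiP (dd k ℓ m) m.natAbs ℓ.natAbs (Real.cos (2 * χ))

/-- The circular harmonic: `cos(|j|·θ)` if `j ≥ 0`, else `sin(|j|·θ)`. -/
def circHarm (j : ℤ) (θ : ℝ) : ℝ :=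
  if 0 ≤ j then Real.cos (j.natAbs * θ) else Real.sin (j.natAbs * θ)

/-- The eigenmode `Ψ̃_{kℓm}` in toroidal coordinates. -/
def PsiT (k : ℕ) (ℓ m : ℤ) (χ θ φ : ℝ) : ℝ :=
  Xrad k ℓ m χ * circHarm ℓ θ * circHarm m φ

/-- The rotation `R(Δθ, Δφ)` of `ℝ⁴`. -/
def Rrot (a b : ℝ) (p : Fin 4 → ℝ) : Fin 4 → ℝ :=
  ![p 0 * Real.cos a - p 1 * Real.sin a,
    p 0 * Real.sin a + p 1 * Real.cos a,
    p 2 * Real.cos b - p 3 * Real.sin b,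
    p 2 * Real.sin b + p 3 * Real.cos b]

/-- The isometry `A(x,y,z,w) = (z, -w, -x, y)`. -/
def Amap (p : Fin 4 → ℝ) : Fin 4 → ℝ :=
  ![p 2, -(p 3), -(p 0), p 1]

/-- The sign `σ_{kℓm}`. -/
def sgn (k : ℕ) (ℓ m : ℤ) : ℝ :=
  (if Even (dd k ℓ m) then 1 else -1) * (if 0 ≤ ℓ then 1 else -1) *
  (if 0 ≤ m then 1 else -1) * (if Even m then 1 else -1)

-- auxiliary

lemma demoivre (n : ℕ) (a : ℝ) :
    ((Real.cos a : ℂ) + (Real.sin a : ℝ) * Complex.I) ^ n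
      = (Real.cos (n * a) : ℂ) + (Real.sin (n * a) : ℝ) * Complex.I := by
  rw [Complex.ofReal_cos, Complex.ofReal_sin, Complex.cos_add_sin_I,
    ← Complex.exp_nat_mul, Complex.ofReal_cos, Complex.ofReal_sin, Complex.cos_add_sin_I]
  congr 1
  push_cast
  ring

lemma key (n : ℕ) (a x y : ℝ) :
    (((x * Real.cos a - y * Real.sin a : ℝ) : ℂ)
        + ((x * Real.sin a + y * Real.cos a : ℝ) : ℂ) * Complex.I) ^ n
      = (((x : ℂ) + y * Complex.I) ^ n)
        * ((Real.cos (n * a) : ℂ) + (Real.sin (n * a) : ℝ) * Complex.I) := by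
  rw [← demoivre, ← mul_pow]
  congr 1
  push_cast
  linear_combination (-(y : ℂ)) * Complex.sin a * Complex.I_sq

lemma natAbs_mul_cast (j : ℤ) (hj : 0 < j) (a : ℝ) :
    ((j.natAbs : ℝ)) * a = (j : ℝ) * a := by
  congr 1
  rw [Nat.cast_natAbs]
  exact_mod_cast abs_of_pos hj

lemma circ_rot_pos (j : ℤ) (hj : 0 < j) (a x y : ℝ) :
    circ j (x * Real.cos a - y * Real.sin a) (x * Real.sin a + y * Real.cos a)
      = Real.cos (j * a) * circ j x y - Real.sin (j * a) * circ (-j) x y := by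
  have hn : ¬ (0:ℤ) ≤ -j := by omega
  simp only [circ, if_pos hj.le, if_neg hn, Int.natAbs_neg]
  rw [key, ← natAbs_mul_cast j hj a]
  simp only [Complex.add_re, Complex.add_im, Complex.mul_re, Complex.mul_im,
    Complex.ofReal_re, Complex.ofReal_im, Complex.I_re, Complex.I_im]
  ring

lemma circ_rot_neg (j : ℤ) (hj : 0 < j) (a x y : ℝ) :
    circ (-j) (x * Real.cos a - y * Real.sin a) (x * Real.sin a + y * Real.cos a)
      = Real.sin (j * a) * circ j x y + Real.cos (j * a) * circ (-j) x y := by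
  have hn : ¬ (0:ℤ) ≤ -j := by omega
  simp only [circ, if_pos hj.le, if_neg hn, Int.natAbs_neg]
  rw [key, ← natAbs_mul_cast j hj a]
  simp only [Complex.add_re, Complex.add_im, Complex.mul_re, Complex.mul_im,
    Complex.ofReal_re, Complex.ofReal_im, Complex.I_re, Complex.I_im]
  ring

def Ssum (k : ℕ) (ℓ m : ℤ) (p : Fin 4 → ℝ) : ℝ :=
  ∑ i ∈ Finset.range (dd k ℓ m + 1),
      (Nat.choose (m.natAbs + dd k ℓ m) i : ℝ) *
      (Nat.choose (ℓ.natAbs + dd k ℓ m) (dd k ℓ m - i) : ℝ) *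
      (p 0 ^ 2 + p 1 ^ 2) ^ i * (-(p 2 ^ 2 + p 3 ^ 2)) ^ (dd k ℓ m - i)

lemma F_eq (k : ℕ) (ℓ m : ℤ) (p : Fin 4 → ℝ) :
    F k ℓ m p = Ssum k ℓ m p * circ ℓ (p 0) (p 1) * circ m (p 2) (p 3) := rfl

lemma Ssum_nl (k : ℕ) (ℓ m : ℤ) (p : Fin 4 → ℝ) : Ssum k (-ℓ) m p = Ssum k ℓ m p := by
  simp [Ssum, dd, Int.natAbs_neg]

lemma Ssum_nr (k : ℕ) (ℓ m : ℤ) (p : Fin 4 → ℝ) : Ssum k ℓ (-m) p = Ssum k ℓ m p := by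
  simp [Ssum, dd, Int.natAbs_neg]

lemma sq_rot (a x y : ℝ) :
    (x * Real.cos a - y * Real.sin a) ^ 2 + (x * Real.sin a + y * Real.cos a) ^ 2
      = x ^ 2 + y ^ 2 := by
  linear_combination (x ^ 2 + y ^ 2) * (Real.sin_sq_add_cos_sq a)

lemma Rrot0 (a b : ℝ) (p : Fin 4 → ℝ) :
    Rrot a b p 0 = p 0 * Real.cos a - p 1 * Real.sin a := rfl
lemma Rrot1 (a b : ℝ) (p : Fin 4 → ℝ) :
    Rrot a b p 1 = p 0 * Real.sin a + p 1 * Real.cos a := rfl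
lemma Rrot2 (a b : ℝ) (p : Fin 4 → ℝ) :
    Rrot a b p 2 = p 2 * Real.cos b - p 3 * Real.sin b := rfl
lemma Rrot3 (a b : ℝ) (p : Fin 4 → ℝ) :
    Rrot a b p 3 = p 2 * Real.sin b + p 3 * Real.cos b := rfl

lemma Ssum_rot (k : ℕ) (ℓ m : ℤ) (a b : ℝ) (v : Fin 4 → ℝ) :
    Ssum k ℓ m (Rrot a b v) = Ssum k ℓ m v := by
  simp only [Ssum, Rrot0, Rrot1, Rrot2, Rrot3, sq_rot]

lemma F_rot_pp (k : ℕ) (ℓ m : ℤ) (hl : 0 < ℓ) (hm : 0 < m) (a b : ℝ) (v : Fin 4 → ℝ) :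
    F k ℓ m (Rrot a b v)
      = Real.cos (ℓ * a) * Real.cos (m * b) * F k ℓ m v
        - Real.cos (ℓ * a) * Real.sin (m * b) * F k ℓ (-m) v
        - Real.sin (ℓ * a) * Real.cos (m * b) * F k (-ℓ) m v
        + Real.sin (ℓ * a) * Real.sin (m * b) * F k (-ℓ) (-m) v := by
  simp only [F_eq, Rrot0, Rrot1, Rrot2, Rrot3, Ssum_rot,
    circ_rot_pos ℓ hl, circ_rot_pos m hm, Ssum_nl, Ssum_nr]
  ring

lemma F_rot_pn (k : ℕ) (ℓ m : ℤ) (hl : 0 < ℓ) (hm : 0 < m) (a b : ℝ) (v : Fin 4 → ℝ) :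
    F k ℓ (-m) (Rrot a b v)
      = Real.cos (ℓ * a) * Real.sin (m * b) * F k ℓ m v
        + Real.cos (ℓ * a) * Real.cos (m * b) * F k ℓ (-m) v
        - Real.sin (ℓ * a) * Real.sin (m * b) * F k (-ℓ) m v
        - Real.sin (ℓ * a) * Real.cos (m * b) * F k (-ℓ) (-m) v := by
  simp only [F_eq, Rrot0, Rrot1, Rrot2, Rrot3, Ssum_rot,
    circ_rot_pos ℓ hl, circ_rot_neg m hm, Ssum_nl, Ssum_nr]
  ring

lemma F_rot_np (k : ℕ) (ℓ m : ℤ) (hl : 0 < ℓ) (hm : 0 < m) (a b : ℝ) (v : Fin 4 → ℝ) :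
    F k (-ℓ) m (Rrot a b v)
      = Real.sin (ℓ * a) * Real.cos (m * b) * F k ℓ m v
        - Real.sin (ℓ * a) * Real.sin (m * b) * F k ℓ (-m) v
        + Real.cos (ℓ * a) * Real.cos (m * b) * F k (-ℓ) m v
        - Real.cos (ℓ * a) * Real.sin (m * b) * F k (-ℓ) (-m) v := by
  simp only [F_eq, Rrot0, Rrot1, Rrot2, Rrot3, Ssum_rot,
    circ_rot_neg ℓ hl, circ_rot_pos m hm, Ssum_nl, Ssum_nr]
  ring

lemma F_rot_nn (k : ℕ) (ℓ m : ℤ) (hl : 0 < ℓ) (hm : 0 < m) (a b : ℝ) (v : Fin 4 → ℝ) :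
    F k (-ℓ) (-m) (Rrot a b v)
      = Real.sin (ℓ * a) * Real.sin (m * b) * F k ℓ m v
        + Real.sin (ℓ * a) * Real.cos (m * b) * F k ℓ (-m) v
        + Real.cos (ℓ * a) * Real.sin (m * b) * F k (-ℓ) m v
        + Real.cos (ℓ * a) * Real.cos (m * b) * F k (-ℓ) (-m) v := by
  simp only [F_eq, Rrot0, Rrot1, Rrot2, Rrot3, Ssum_rot,
    circ_rot_neg ℓ hl, circ_rot_neg m hm, Ssum_nl, Ssum_nr]
  ring

/-- the rotation `R(Δθ, Δφ)` acts on the rotated basis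
`e₁, e₂, e₃, e₄` as a pair of plane rotations through `ℓΔθ − mΔφ` and `ℓΔθ + mΔφ`. -/
theorem stmt_10 (k : ℕ) (ℓ m : ℤ) (hl : 0 < ℓ) (hm : 0 < m)
    (h1 : ℓ + m ≤ (k : ℤ)) (h2 : Int.ModEq 2 (ℓ + m) k) (Δθ Δφ : ℝ) :
    let e1 : (Fin 4 → ℝ) → ℝ := fun v => (F k ℓ m v + F k (-ℓ) (-m) v) / Real.sqrt 2
    let e2 : (Fin 4 → ℝ) → ℝ := fun v => (F k (-ℓ) m v - F k ℓ (-m) v) / Real.sqrt 2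
    let e3 : (Fin 4 → ℝ) → ℝ := fun v => (F k ℓ m v - F k (-ℓ) (-m) v) / Real.sqrt 2
    let e4 : (Fin 4 → ℝ) → ℝ := fun v => (F k (-ℓ) m v + F k ℓ (-m) v) / Real.sqrt 2
    let α : ℝ := ℓ * Δθ - m * Δφ
    let β : ℝ := ℓ * Δθ + m * Δφ
    (e1 ∘ Rrot Δθ Δφ = fun v => Real.cos α * e1 v - Real.sin α * e2 v)
    ∧ (e2 ∘ Rrot Δθ Δφ = fun v => Real.sin α * e1 v + Real.cos α * e2 v)
    ∧ (e3 ∘ Rrot Δθ Δφ = fun v => Real.cos β * e3 v - Real.sin β * e4 v)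
    ∧ (e4 ∘ Rrot Δθ Δφ = fun v => Real.sin β * e3 v + Real.cos β * e4 v) := by
  refine ⟨?_, ?_, ?_, ?_⟩ <;> funext v <;>
    simp only [Function.comp_apply, F_rot_pp k ℓ m hl hm Δθ Δφ v,
      F_rot_pn k ℓ m hl hm Δθ Δφ v, F_rot_np k ℓ m hl hm Δθ Δφ v,
      F_rot_nn k ℓ m hl hm Δθ Δφ v, Real.cos_sub, Real.sin_sub,
      Real.cos_add, Real.sin_add] <;>
    ring

end
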